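/- The function ρ(c, τ) := 2(c² + τ²)Q(τ/c) - √(2/π)·c·τ·e^{-τ²/(2c²)}, for fixed c > 0, is nonincreasing in τ on [0, ∞), with ρ(c, 0) = c² and ρ(c, τ) → 0 as τ → ∞. -/

import Mathlib

open Real

noncomputable def Qtail (x : ℝ) : ℝ := (1 / Real.sqrt (2 * π)) * ∫ t in Set.Ioi x, Real.exp (-t ^ 2 / 2)

noncomputable def rho (c τ : ℝ) : ℝ :=
  2 * (c ^ 2 + τ ^ 2) * Qtail (τ / c) - Real.sqrt (2 / π) * c * τ * Real.exp (-τ ^ 2 / (2 * c ^ 2))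

/-!
Since `ρ(c, τ) = c² ρ(1, τ / c)`, it suffices to treat `c = 1`. There, with `φ = -Q'` the standard
normal density, `d/dx ρ(1, x) = 4 (x Q(x) - φ(x))`, which is `≤ 0` by the Mills-ratio bound
`x Q(x) ≤ φ(x)`, obtained by integrating `x φ(t) ≤ t φ(t)` over `t > x`. The same bound gives
`0 ≤ 2 (1 + x²) Q(x) ≤ 4 x φ(x)` for `x ≥ 1`, so both terms of `ρ(1, x)` are `O(x e^{-x²/2})`.
-/

open MeasureTheory Set Filter Topology

theorem hasDerivAt_integral_Ioi {E : Type*} [NormedAddCommGroup E] [NormedSpace ℝ E]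
    [CompleteSpace E] {f : ℝ → E} (hfi : Integrable f) (hf : Continuous f) (x : ℝ) :
    HasDerivAt (fun y => ∫ t in Ioi y, f t) (-f x) x := by
  have hsplit : (fun y => ∫ t in Ioi y, f t) = fun y => (∫ t in Ioi 0, f t) - ∫ t in 0..y, f t := by
    ext y
    rw [← intervalIntegral.integral_Ioi_sub_Ioi' hfi.integrableOn hfi.integrableOn, sub_sub_cancel]
  rw [hsplit]
  exact (hf.integral_hasStrictDerivAt 0 x).hasDerivAt.const_sub _

theorem neg_sq_div_two (t : ℝ) : -t ^ 2 / 2 = -(1 / 2) * t ^ 2 := by ring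

theorem integrable_exp_neg_sq_div_two : Integrable fun t : ℝ => exp (-t ^ 2 / 2) := by
  simpa only [neg_sq_div_two] using integrable_exp_neg_mul_sq (one_half_pos (α := ℝ))

theorem integrable_mul_exp_neg_sq_div_two : Integrable fun t : ℝ => t * exp (-t ^ 2 / 2) := by
  simpa only [neg_sq_div_two] using integrable_mul_exp_neg_mul_sq (one_half_pos (α := ℝ))

theorem tendsto_mul_exp_neg_sq_div_two :
    Tendsto (fun x : ℝ => x * exp (-x ^ 2 / 2)) atTop (𝓝 0) := by
  refine ((tendsto_rpow_abs_mul_exp_neg_mul_sq_cocompact one_half_pos 1).mono_left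
    atTop_le_cocompact).congr' ?_
  filter_upwards [eventually_ge_atTop 0] with x hx
  rw [rpow_one, abs_of_nonneg hx, neg_sq_div_two]

theorem hasDerivAt_exp_neg_sq_div_two (t : ℝ) :
    HasDerivAt (fun t => exp (-t ^ 2 / 2)) (-t * exp (-t ^ 2 / 2)) t := by
  have h : HasDerivAt (fun t : ℝ => exp (-t ^ 2 / 2))
      (exp (-t ^ 2 / 2) * (-(2 * t ^ (2 - 1)) / 2)) t :=
    ((hasDerivAt_pow 2 t).neg.div_const 2).exp
  exact h.congr_deriv (by ring)

theorem integral_Ioi_mul_exp_neg_sq_div_two (x : ℝ) :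
    ∫ t in Ioi x, t * exp (-t ^ 2 / 2) = exp (-x ^ 2 / 2) := by
  have hderiv (t : ℝ) : HasDerivAt (fun t => -exp (-t ^ 2 / 2)) (t * exp (-t ^ 2 / 2)) t :=
    (hasDerivAt_exp_neg_sq_div_two t).neg.congr_deriv (by ring)
  have hlim : Tendsto (fun t : ℝ => -exp (-t ^ 2 / 2)) atTop (𝓝 0) := by
    have h := tendsto_exp_neg_atTop_nhds_zero.comp
      (Tendsto.atTop_div_const two_pos (tendsto_pow_atTop (α := ℝ) two_ne_zero))
    simpa [Function.comp_def, neg_div] using h.neg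
  rw [integral_Ioi_of_hasDerivAt_of_tendsto' (fun t _ => hderiv t)
    integrable_mul_exp_neg_sq_div_two.integrableOn hlim]
  ring

theorem mul_integral_Ioi_exp_neg_sq_div_two_le (x : ℝ) :
    x * ∫ t in Ioi x, exp (-t ^ 2 / 2) ≤ exp (-x ^ 2 / 2) := by
  rw [← integral_const_mul, ← integral_Ioi_mul_exp_neg_sq_div_two x]
  refine setIntegral_mono_on (integrable_exp_neg_sq_div_two.const_mul x).integrableOn
    integrable_mul_exp_neg_sq_div_two.integrableOn measurableSet_Ioi fun t ht => ?_
  exact mul_le_mul_of_nonneg_right (le_of_lt ht) (exp_pos _).le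

theorem sqrt_two_div_pi : √(2 / π) = 2 / √(2 * π) := by
  rw [show 2 / π = 2 ^ 2 / (2 * π) by field_simp, sqrt_div' _ (by positivity),
    sqrt_sq zero_le_two]

theorem Qtail_nonneg (x : ℝ) : 0 ≤ Qtail x :=
  mul_nonneg (by positivity) (setIntegral_nonneg measurableSet_Ioi fun t _ => (exp_pos _).le)

theorem Qtail_zero : Qtail 0 = 1 / 2 := by
  rw [Qtail]
  simp only [neg_sq_div_two]
  rw [integral_gaussian_Ioi, show π / (1 / 2) = 2 * π by ring]
  field_simp

theorem hasDerivAt_Qtail (x : ℝ) : HasDerivAt Qtail (-(exp (-x ^ 2 / 2) / √(2 * π))) x :=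
  ((hasDerivAt_integral_Ioi integrable_exp_neg_sq_div_two (by fun_prop) x).const_mul
    (1 / √(2 * π))).congr_deriv (by ring)

theorem mul_Qtail_le (x : ℝ) : x * Qtail x ≤ exp (-x ^ 2 / 2) / √(2 * π) := by
  have := mul_integral_Ioi_exp_neg_sq_div_two_le x
  rw [Qtail, mul_left_comm, one_div, div_eq_inv_mul]
  gcongr

theorem rho_one_apply (x : ℝ) :
    rho 1 x = 2 * (1 + x ^ 2) * Qtail x - √(2 / π) * x * exp (-x ^ 2 / 2) := by
  simp [rho]

theorem rho_eq_sq_mul_rho_one {c : ℝ} (hc : c ≠ 0) (τ : ℝ) : rho c τ = c ^ 2 * rho 1 (τ / c) := by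
  have hexp : -(τ / c) ^ 2 / 2 = -τ ^ 2 / (2 * c ^ 2) := by field_simp
  rw [rho_one_apply, rho, hexp]
  field_simp

theorem hasDerivAt_rho_one (x : ℝ) :
    HasDerivAt (rho 1) (4 * (x * Qtail x - exp (-x ^ 2 / 2) / √(2 * π))) x := by
  have h := ((((hasDerivAt_pow 2 x).const_add 1).const_mul 2).mul (hasDerivAt_Qtail x)).sub
    (((hasDerivAt_id x).const_mul √(2 / π)).mul (hasDerivAt_exp_neg_sq_div_two x))
  rw [show rho 1 = _ from funext rho_one_apply]
  refine h.congr_deriv ?_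
  rw [sqrt_two_div_pi, id]
  field_simp
  ring

theorem antitone_rho_one : Antitone (rho 1) := by
  refine antitone_of_deriv_nonpos (fun x => (hasDerivAt_rho_one x).differentiableAt) fun x => ?_
  rw [(hasDerivAt_rho_one x).deriv]
  linarith [mul_Qtail_le x]

theorem neg_mul_le_rho_one (x : ℝ) : -√(2 / π) * (x * exp (-x ^ 2 / 2)) ≤ rho 1 x := by
  have : 0 ≤ 2 * (1 + x ^ 2) * Qtail x := mul_nonneg (by positivity) (Qtail_nonneg x)
  rw [rho_one_apply]
  linarith

theorem rho_one_le {x : ℝ} (hx : 1 ≤ x) : rho 1 x ≤ 4 / √(2 * π) * (x * exp (-x ^ 2 / 2)) := by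
  have hQ := Qtail_nonneg x
  have hmills := mul_Qtail_le x
  calc rho 1 x ≤ 2 * (1 + x ^ 2) * Qtail x := by
        rw [rho_one_apply]
        have : 0 ≤ √(2 / π) * x * exp (-x ^ 2 / 2) := by positivity
        linarith
    _ ≤ 4 * x * (x * Qtail x) := by
        nlinarith [mul_nonneg (sub_nonneg.2 (one_le_pow₀ hx : 1 ≤ x ^ 2)) hQ]
    _ ≤ 4 * x * (exp (-x ^ 2 / 2) / √(2 * π)) := by gcongr
    _ = 4 / √(2 * π) * (x * exp (-x ^ 2 / 2)) := by ring

theorem tendsto_rho_one_atTop : Tendsto (rho 1) atTop (𝓝 0) := by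
  have hlower := tendsto_mul_exp_neg_sq_div_two.const_mul (-√(2 / π))
  have hupper := tendsto_mul_exp_neg_sq_div_two.const_mul (4 / √(2 * π))
  rw [mul_zero] at hlower hupper
  refine tendsto_of_tendsto_of_tendsto_of_le_of_le' hlower hupper
    (Eventually.of_forall neg_mul_le_rho_one) ?_
  filter_upwards [eventually_ge_atTop 1] with x hx using rho_one_le hx

theorem rho_antitone_and_limits (c : ℝ) (hc : 0 < c) :
    AntitoneOn (rho c) (Set.Ici 0) ∧ rho c 0 = c ^ 2 ∧
      Filter.Tendsto (rho c) Filter.atTop (nhds 0) := by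
  have hscale : rho c = fun τ => c ^ 2 * rho 1 (τ / c) := funext (rho_eq_sq_mul_rho_one hc.ne')
  refine ⟨?_, ?_, ?_⟩
  · intro a _ b _ hab
    rw [hscale]
    exact mul_le_mul_of_nonneg_left (antitone_rho_one (div_le_div_of_nonneg_right hab hc.le))
      (sq_nonneg c)
  · simp [hscale, rho_one_apply, Qtail_zero]
  · rw [hscale]
    simpa using (tendsto_rho_one_atTop.comp (tendsto_id.atTop_div_const hc)).const_mul (c ^ 2)
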